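/- arXiv:q-alg/9505024 — 4 statements merged into one kernel-verified Lean document; each statement's English description precedes it below -/
import Mathlib

section
/- Let A and B be associative unital algebras over a field k, and let f : A → B be a k-linear map with f(1_A) = 1_B. Then f is an algebra homomorphism if and only if the kernel of the map F : A ⊗ B → B defined by F(a ⊗ b) = f(a)·b is a left ideal of the algebra A ⊗ B^op (where B^op is B with the opposite multiplication). -/
/-!
For a multiplicative `f`, the map `F x = ∑ f aᵢ * bᵢ` on `A ⊗ Bᵐᵒᵖ` satisfies
`F ((a ⊗ b) * x) = f a * F x * b`, so its kernel is stable under left multiplication.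
Conversely, `b ⊗ 1 - 1 ⊗ f b` lies in the kernel because `f 1 = 1`; multiplying it on the
left by `a ⊗ 1` and applying `F` gives `f (a * b) - f a * f b = 0`.
-/

open TensorProduct

namespace TensorProduct

variable {k A B : Type*} [CommSemiring k] [Semiring A] [Algebra k A] [Semiring B] [Algebra k B]

def mulOpMap (f : A →ₗ[k] B) : A ⊗[k] Bᵐᵒᵖ →ₗ[k] B :=
  (LinearMap.mul' k B).comp (map f (MulOpposite.opLinearEquiv k).symm.toLinearMap)

@[simp]
theorem mulOpMap_tmul (f : A →ₗ[k] B) (a : A) (b : Bᵐᵒᵖ) :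
    mulOpMap f (a ⊗ₜ b) = f a * b.unop := by
  simp [mulOpMap]

theorem mulOpMap_tmul_mul {f : A →ₗ[k] B} (hf : ∀ a b, f (a * b) = f a * f b)
    (a : A) (b : Bᵐᵒᵖ) (x : A ⊗[k] Bᵐᵒᵖ) :
    mulOpMap f ((a ⊗ₜ b) * x) = f a * mulOpMap f x * b.unop := by
  induction x using TensorProduct.induction_on with
  | zero => simp
  | tmul a' b' => simp [Algebra.TensorProduct.tmul_mul_tmul, hf, mul_assoc]
  | add x y hx hy => simp [mul_add, hx, hy, add_mul]

theorem mulOpMap_mul_eq_zero {f : A →ₗ[k] B} (hf : ∀ a b, f (a * b) = f a * f b)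
    (c : A ⊗[k] Bᵐᵒᵖ) {x : A ⊗[k] Bᵐᵒᵖ} (hx : mulOpMap f x = 0) :
    mulOpMap f (c * x) = 0 := by
  induction c using TensorProduct.induction_on with
  | zero => simp
  | tmul a b => rw [mulOpMap_tmul_mul hf, hx, mul_zero, zero_mul]
  | add y z hy hz => rw [add_mul, map_add, hy, hz, add_zero]

def mulOpMapKerIdeal {f : A →ₗ[k] B} (hf : ∀ a b, f (a * b) = f a * f b) :
    Ideal (A ⊗[k] Bᵐᵒᵖ) where
  toAddSubmonoid := (LinearMap.ker (mulOpMap f)).toAddSubmonoid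
  smul_mem' c _ hx := mulOpMap_mul_eq_zero hf c hx

theorem coe_mulOpMapKerIdeal {f : A →ₗ[k] B} (hf : ∀ a b, f (a * b) = f a * f b) :
    (mulOpMapKerIdeal hf : Set (A ⊗[k] Bᵐᵒᵖ)) = {x | mulOpMap f x = 0} :=
  rfl

theorem map_mul_of_mulOpMap_ker_eq_ideal {k A B : Type*} [CommRing k] [Ring A] [Algebra k A]
    [Ring B] [Algebra k B] {f : A →ₗ[k] B} (hf1 : f 1 = 1) (I : Ideal (A ⊗[k] Bᵐᵒᵖ))
    (hI : (I : Set (A ⊗[k] Bᵐᵒᵖ)) = {x | mulOpMap f x = 0}) (a b : A) :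
    f (a * b) = f a * f b := by
  have hmem (x : A ⊗[k] Bᵐᵒᵖ) : x ∈ I ↔ mulOpMap f x = 0 := by
    rw [← SetLike.mem_coe, hI, Set.mem_ofPred_eq]
  have hb : b ⊗ₜ[k] (1 : Bᵐᵒᵖ) - (1 : A) ⊗ₜ MulOpposite.op (f b) ∈ I := by
    simp [hmem, hf1]
  have hab := (hmem _).mp (I.mul_mem_left (a ⊗ₜ[k] (1 : Bᵐᵒᵖ)) hb)
  simpa [mul_sub, Algebra.TensorProduct.tmul_mul_tmul, sub_eq_zero] using hab

end TensorProduct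

/-- for algebras `A`, `B` over a field `k` and a `k`-linear map
`f : A → B` with `f 1 = 1`, the map `f` is an algebra homomorphism iff the kernel
of `F : A ⊗ B → B`, `a ⊗ b ↦ f a * b`, is a left ideal of `A ⊗ Bᵐᵒᵖ`. -/
theorem stmt0 (k : Type*) [Field k] (A B : Type*) [Ring A] [Algebra k A]
    [Ring B] [Algebra k B] (f : A →ₗ[k] B) (hf1 : f 1 = 1) :
    (∀ a b : A, f (a * b) = f a * f b) ↔
      ∃ I : Ideal (A ⊗[k] Bᵐᵒᵖ),
        (I : Set (A ⊗[k] Bᵐᵒᵖ)) =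
          {x : A ⊗[k] Bᵐᵒᵖ |
            ((LinearMap.mul' k B).comp
              (TensorProduct.map f (MulOpposite.opLinearEquiv k).symm.toLinearMap)) x = 0} :=
  ⟨fun hf => ⟨mulOpMapKerIdeal hf, coe_mulOpMapKerIdeal hf⟩,
    fun ⟨I, hI⟩ => map_mul_of_mulOpMap_ker_eq_ideal hf1 I hI⟩
end

section
/- Let A be a finite-dimensional associative unital algebra over a field k, and let H = End_k(A). For a ∈ A let α(a) ∈ H be left multiplication by a and β(a) ∈ H be right multiplication by a. Then the kernel of the map T₂ : H ⊗ H → Hom_k(A ⊗ A, A) given by T₂(h₁ ⊗ h₂)(a ⊗ b) = h₁(a)h₂(b) equals the right ideal of H ⊗ H generated by the set {β(a) ⊗ 1 − 1 ⊗ α(a) : a ∈ A}. -/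
/-!
`homTensorHomMap` is an algebra isomorphism `Φ : End A ⊗ End A ≃ End (A ⊗ A)` and
`T₂ x = mul' ∘ Φ x`, so `x ∈ ker T₂` iff `range (Φ x) ≤ ker mul'`. In `End V`, `V` finite free,
the right ideal generated by maps `gᵢ` is exactly `{f | range f ≤ ⨆ i, range gᵢ}`: writing `f` as
a sum of rank-one maps `φ(·) w` reduces this to `w = gᵢ u`, where `φ(·) gᵢ u = gᵢ ∘ φ(·) u`.
Finally `ker mul' = ⨆ a, range Φ(β a ⊗ 1 - 1 ⊗ α a)`, because
`u ⊗ v - uv ⊗ 1 = -Φ(β v ⊗ 1 - 1 ⊗ α v)(u ⊗ 1)`.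
-/

open TensorProduct MulOpposite

section EndRightIdeal

variable {R V : Type*} [CommSemiring R] [AddCommMonoid V] [Module R V]

theorem Module.End.range_unop_le_iSup_range_of_mem_span {ι : Type*} {g : ι → Module.End R V}
    {x : (Module.End R V)ᵐᵒᵖ} (hx : x ∈ Ideal.span (Set.range fun i => op (g i))) :
    LinearMap.range (unop x) ≤ ⨆ i, LinearMap.range (g i) := by
  induction hx using Submodule.span_induction with
  | mem x hx =>
    obtain ⟨i, rfl⟩ := hx
    exact le_iSup (fun i => LinearMap.range (g i)) i
  | zero => simp
  | add x y _ _ hx hy =>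
    exact (LinearMap.range_add_le _ _).trans (sup_le hx hy)
  | smul c x _ hx =>
    exact (LinearMap.range_comp_le_range (unop c) (unop x)).trans hx

theorem Module.End.op_smulRight_mem_span_of_mem_iSup_range {ι : Type*} {g : ι → Module.End R V}
    {w : V} (hw : w ∈ ⨆ i, LinearMap.range (g i)) (φ : V →ₗ[R] R) :
    op (φ.smulRight w) ∈ Ideal.span (Set.range fun i => op (g i)) := by
  induction hw using Submodule.iSup_induction' with
  | mem i w hw =>
    obtain ⟨u, rfl⟩ := hw
    have : φ.smulRight (g i u) = g i * φ.smulRight u := by ext; simp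
    rw [this, op_mul]
    exact Ideal.mul_mem_left _ _ (Ideal.subset_span ⟨i, rfl⟩)
  | zero => simp
  | add x y _ _ hx hy =>
    have : φ.smulRight (x + y) = φ.smulRight x + φ.smulRight y := by ext; simp
    rw [this, op_add]
    exact add_mem hx hy

theorem Module.End.eq_sum_smulRight {ι : Type*} [Fintype ι] (b : Module.Basis ι R V)
    (f : Module.End R V) : f = ∑ i, (b.coord i).smulRight (f (b i)) := by
  classical
  refine b.ext fun j => ?_
  simp [Module.Basis.coord_apply, Finsupp.single_apply]

theorem Module.End.op_mem_span_iff_range_le_iSup_range [Module.Free R V] [Module.Finite R V]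
    {ι : Type*} (g : ι → Module.End R V) (f : Module.End R V) :
    op f ∈ Ideal.span (Set.range fun i => op (g i)) ↔
      LinearMap.range f ≤ ⨆ i, LinearMap.range (g i) := by
  refine ⟨range_unop_le_iSup_range_of_mem_span, fun hf => ?_⟩
  rw [eq_sum_smulRight (Module.Free.chooseBasis R V) f, Finset.op_sum]
  exact Ideal.sum_mem _ fun i _ =>
    op_smulRight_mem_span_of_mem_iSup_range (hf (LinearMap.mem_range_self f _)) _

end EndRightIdeal

theorem RingEquiv.op_mem_span_range_op_iff {S T ι : Type*} [Semiring S] [Semiring T]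
    (e : S ≃+* T) (s : ι → S) (x : S) :
    op (e x) ∈ Ideal.span (Set.range fun i => op (e (s i))) ↔
      op x ∈ Ideal.span (Set.range fun i => op (s i)) := by
  rw [← Ideal.apply_mem_of_equiv_iff (f := RingEquiv.op e), Ideal.map_span, ← Set.range_comp]
  rfl

section EndTensorEnd

variable {R M N : Type*} [CommSemiring R] [AddCommMonoid M] [AddCommMonoid N] [Module R M]
  [Module R N]

theorem Module.endTensorEndAlgHom_apply_eq_homTensorHomMap
    (x : Module.End R M ⊗[R] Module.End R N) :
    Module.endTensorEndAlgHom (R := R) (S := R) (A := R) x = homTensorHomMap (.id R) M N M N x := by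
  induction x using TensorProduct.induction_on with
  | zero => simp
  | tmul f g => ext; rfl
  | add x y hx hy => simp [hx, hy]

variable (R M N) [Module.Projective R M] [Module.Finite R M] [Module.Projective R N]
  [Module.Finite R N]

noncomputable def Module.endTensorEndAlgEquiv :
    Module.End R M ⊗[R] Module.End R N ≃ₐ[R] Module.End R (M ⊗[R] N) :=
  AlgEquiv.ofBijective Module.endTensorEndAlgHom <| by
    convert (homTensorHomEquiv R M N M N).bijective using 1
    ext x : 1
    rw [homTensorHomEquiv_apply]
    exact Module.endTensorEndAlgHom_apply_eq_homTensorHomMap x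

variable {R M N} in
theorem Module.endTensorEndAlgEquiv_apply (x : Module.End R M ⊗[R] Module.End R N) :
    Module.endTensorEndAlgEquiv R M N x = homTensorHomMap (.id R) M N M N x :=
  Module.endTensorEndAlgHom_apply_eq_homTensorHomMap x

end EndTensorEnd

theorem LinearMap.ker_mul'_eq_iSup_range {k A : Type*} [CommRing k] [Ring A] [Algebra k A] :
    LinearMap.ker (LinearMap.mul' k A) =
      ⨆ a : A, LinearMap.range ((mulRight k a).rTensor A - (mulLeft k a).lTensor A) := by
  refine le_antisymm (fun e he => ?_) (iSup_le fun a => range_le_ker_iff.mpr ?_)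
  · have hsub : ∀ e : A ⊗[k] A, mul' k A e ⊗ₜ[k] (1 : A) - e ∈
        ⨆ a : A, LinearMap.range ((mulRight k a).rTensor A - (mulLeft k a).lTensor A) := by
      intro e
      induction e using TensorProduct.induction_on with
      | zero => simp
      | tmul u v =>
        refine Submodule.mem_iSup_of_mem v ⟨u ⊗ₜ 1, ?_⟩
        simp
      | add x y hx hy =>
        convert add_mem hx hy using 1
        rw [map_add, add_tmul]
        abel
    simpa [LinearMap.mem_ker.mp he] using hsub e
  · ext u v
    simp [mul_assoc]

/-- for a finite-dimensional algebra `A` over a field `k` and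
`H = End_k A`, the kernel of `T₂ : H ⊗ H → Hom(A ⊗ A, A)`,
`T₂(h₁ ⊗ h₂)(a ⊗ b) = h₁ a * h₂ b`, is the right ideal of `H ⊗ H` generated by
`{β a ⊗ 1 - 1 ⊗ α a}` where `α a` (resp. `β a`) is left (resp. right)
multiplication by `a`.  (A right ideal of `H ⊗ H` is a left ideal of its
multiplicative opposite.) -/
theorem stmt2 (k A : Type*) [Field k] [Ring A] [Algebra k A] [FiniteDimensional k A] :
    ∀ x : (Module.End k A) ⊗[k] (Module.End k A),
      ((LinearMap.llcomp k (A ⊗[k] A) (A ⊗[k] A) A (LinearMap.mul' k A)).comp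
          (TensorProduct.homTensorHomMap (RingHom.id k) A A A A)) x = 0 ↔
        MulOpposite.op x ∈
          Ideal.span (MulOpposite.op ''
            {y : (Module.End k A) ⊗[k] (Module.End k A) |
              ∃ a : A, y = (LinearMap.mulRight k a) ⊗ₜ[k] (1 : Module.End k A)
                  - (1 : Module.End k A) ⊗ₜ[k] (LinearMap.mulLeft k a)}) := by
  intro x
  set s : A → Module.End k A ⊗[k] Module.End k A := fun a =>
    LinearMap.mulRight k a ⊗ₜ[k] 1 - 1 ⊗ₜ[k] LinearMap.mulLeft k a
  set Φ := (Module.endTensorEndAlgEquiv k A A).toRingEquiv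
  have hΦ (y) : Φ y = homTensorHomMap (.id k) A A A A y := Module.endTensorEndAlgEquiv_apply y
  have hΦs (a : A) : Φ (s a) =
      (LinearMap.mulRight k a).rTensor A - (LinearMap.mulLeft k a).lTensor A := by
    rw [hΦ]
    simp [s, homTensorHomMap_apply, LinearMap.rTensor, LinearMap.lTensor, Module.End.one_eq_id]
  have hgens : op '' {y | ∃ a, y = s a} = Set.range fun a => op (s a) := by
    ext; simp [eq_comm]
  rw [hgens, ← Φ.op_mem_span_range_op_iff, Module.End.op_mem_span_iff_range_le_iSup_range]
  simp only [hΦs, ← LinearMap.ker_mul'_eq_iSup_range, LinearMap.range_le_ker_iff, hΦ]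
  rfl
end

section
/- Let A be a finite-dimensional Hopf algebra with basis {a_t} and dual basis {x_t}. The map T₁ : A* # A → End_k(A*) defined by T₁(x # a)(y) = x·(a ⇀ y) is an algebra isomorphism; its inverse sends φ ∈ End_k(A*) to Σ_{s,t} φ(x_s)x_t # S⁻¹(a_t)a_s. -/
/-- A finite-dimensional Hopf algebra over a field `k`, presented by structure
constants with respect to a finite basis indexed by `ι`.  The underlying space
of the Hopf algebra `A` is `ι → k` (with basis the delta functions `e i`), and
its dual Hopf algebra `A*` is also modelled on `ι → k` (using the dual basis).

* `mul s t r` is the coefficient of `e r` in `e s * e t`;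
* `one` is the coefficient vector of the unit of `A`;
* `comul r s t` is the coefficient of `e s ⊗ e t` in `Δ (e r)`;
* `counit t` is `ε (e t)`;
* `S t r` is the coefficient of `e r` in the antipode `S (e t)`, and `Sinv` is
  the matrix of the (composition) inverse of the antipode.

The axioms express associativity, unitality, coassociativity, counitality,
that `Δ` and `ε` are algebra maps, the antipode identities, and that `Sinv`
is inverse to `S`. -/
structure FinHopfSC (k : Type*) [Field k] (ι : Type*) [Fintype ι] [DecidableEq ι] where
  mul : ι → ι → ι → k
  one : ι → k
  comul : ι → ι → ι → k
  counit : ι → k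
  S : ι → ι → k
  Sinv : ι → ι → k
  assoc : ∀ a b c r, (∑ s, mul a b s * mul s c r) = ∑ s, mul b c s * mul a s r
  one_mul : ∀ b r, (∑ s, one s * mul s b r) = if b = r then 1 else 0
  mul_one : ∀ a r, (∑ s, one s * mul a s r) = if a = r then 1 else 0
  coassoc : ∀ r a b c, (∑ s, comul r s c * comul s a b) = ∑ s, comul r a s * comul s b c
  counit_comul : ∀ r t, (∑ s, comul r s t * counit s) = if r = t then 1 else 0
  comul_counit : ∀ r t, (∑ s, comul r t s * counit s) = if r = t then 1 else 0
  comul_mul : ∀ a b s t, (∑ r, mul a b r * comul r s t) =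
      ∑ a1, ∑ a2, ∑ b1, ∑ b2, comul a a1 a2 * comul b b1 b2 * mul a1 b1 s * mul a2 b2 t
  counit_mul : ∀ a b, (∑ r, mul a b r * counit r) = counit a * counit b
  comul_one : ∀ s t, (∑ r, one r * comul r s t) = one s * one t
  counit_one : (∑ r, one r * counit r) = 1
  antipode_left : ∀ r t, (∑ a, ∑ b, ∑ s, comul r a b * S a s * mul s b t) = counit r * one t
  antipode_right : ∀ r t, (∑ a, ∑ b, ∑ s, comul r a b * S b s * mul a s t) = counit r * one t
  S_Sinv : ∀ a r, (∑ s, S a s * Sinv s r) = if a = r then 1 else 0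
  Sinv_S : ∀ a r, (∑ s, Sinv a s * S s r) = if a = r then 1 else 0

namespace FinHopfSC

variable {k : Type*} [Field k] {ι : Type*} [Fintype ι] [DecidableEq ι]
variable (H : FinHopfSC k ι)

/-- the `i`-th basis vector `a_i` of `A` (equally, the `i`-th dual basis vector
`x_i` of `A*`). -/
def e (i : ι) : ι → k := fun j => if i = j then 1 else 0

/-- the product of `A`. -/
def mulA (a b : ι → k) : ι → k := fun r => ∑ s, ∑ t, a s * b t * H.mul s t r

/-- the unit of `A`. -/
def oneA : ι → k := H.one

/-- the (convolution) product of the dual Hopf algebra `A*`: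
`⟨x y, a⟩ = ⟨x ⊗ y, Δ a⟩`. -/
def mulX (x y : ι → k) : ι → k := fun r => ∑ s, ∑ t, H.comul r s t * x s * y t

/-- the unit of `A*` (the counit of `A`). -/
def oneX : ι → k := H.counit

/-- the antipode of `A`. -/
def SA (a : ι → k) : ι → k := fun r => ∑ t, a t * H.S t r

/-- the inverse of the antipode of `A`. -/
def SAinv (a : ι → k) : ι → k := fun r => ∑ t, a t * H.Sinv t r

/-- the antipode of `A*` (the transpose of the antipode of `A`). -/
def SX (x : ι → k) : ι → k := fun t => ∑ r, H.S t r * x r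

/-- the inverse of the antipode of `A*`. -/
def SXinv (x : ι → k) : ι → k := fun t => ∑ r, H.Sinv t r * x r

/-- the left regular action `a ⇀ x = x₍₁₎ ⟨x₍₂₎, a⟩` of `A` on `A*`, i.e.
`⟨a ⇀ x, b⟩ = ⟨x, b a⟩`. -/
def hit (a x : ι → k) : ι → k := fun r => ∑ s, ∑ t, a s * H.mul r s t * x t

/-- the left adjoint action `ad_x y = x₍₂₎ y S⁻¹(x₍₁₎)` of `A*` (as the Hopf
algebra `A*` with the opposite coproduct) on `A*`. -/
def adX (x y : ι → k) : ι → k := fun r =>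
  ∑ p, ∑ a, ∑ b, H.mul a b p * x p * (H.mulX (e b) (H.mulX y (H.SXinv (e a)))) r

end FinHopfSC

namespace FinHopfSC

variable {k : Type*} [Field k] {ι : Type*} [Fintype ι] [DecidableEq ι]
variable (H : FinHopfSC k ι)

/-- the multiplication of the Heisenberg double `H(A*) = A* # A`
(the smash product of `A*` with `A` for the left regular action):
`(x # a)(y # b) = x (a₍₁₎ ⇀ y) # a₍₂₎ b`.  An element of the Heisenberg double
is recorded by its coefficient matrix `c`, where `c p q` is the coefficient of
the basis element `x_p # a_q`. -/
def smashMul (c d : ι → ι → k) : ι → ι → k := fun u v =>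
  ∑ p, ∑ q, ∑ r, ∑ s, ∑ a, ∑ b, c p q * d r s * H.comul q a b *
    (H.mulX (e p) (H.hit (e a) (e r))) u * (H.mulA (e b) (e s)) v

/-- the identity element `1 # 1` of the Heisenberg double. -/
def smashOne : ι → ι → k := fun u v => H.counit u * H.one v

/-- the source map `α : A* → A* # A`, `x ↦ x # 1`. -/
def alphaH (x : ι → k) : ι → ι → k := fun u v => x u * H.one v

/-- the target map `β : A* → A* # A`, `x ↦ ∑ t, ad_{x_t} x # a_t`. -/
def betaH (x : ι → k) : ι → ι → k := fun u v => H.adX (e v) x u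

end FinHopfSC

namespace FinHopfSC

variable {k : Type*} [Field k] {ι : Type*} [Fintype ι] [DecidableEq ι]
variable (H : FinHopfSC k ι)

/-- left multiplication by `x` in `A*`, as a linear endomorphism of `A*`. -/
def mulXL (x : ι → k) : Module.End k (ι → k) where
  toFun := H.mulX x
  map_add' y z := by
    funext r
    simp [mulX, Pi.add_apply, mul_add, Finset.sum_add_distrib]
  map_smul' c y := by
    funext r
    simp only [mulX, Pi.smul_apply, smul_eq_mul, RingHom.id_apply]
    rw [Finset.mul_sum]
    refine Finset.sum_congr rfl fun s _ => ?_
    rw [Finset.mul_sum]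
    exact Finset.sum_congr rfl fun t _ => by ring

/-- the left regular action `a ⇀ ·` of `a ∈ A` on `A*`, as a linear
endomorphism of `A*`. -/
def hitL (a : ι → k) : Module.End k (ι → k) where
  toFun := H.hit a
  map_add' y z := by
    funext r
    simp [hit, Pi.add_apply, mul_add, Finset.sum_add_distrib]
  map_smul' c y := by
    funext r
    simp only [hit, Pi.smul_apply, smul_eq_mul, RingHom.id_apply]
    rw [Finset.mul_sum]
    refine Finset.sum_congr rfl fun s _ => ?_
    rw [Finset.mul_sum]
    exact Finset.sum_congr rfl fun t _ => by ring

/-- the canonical representation `T₁` of the Heisenberg double `A* # A` on `A*`: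
`T₁(x # a)(y) = x (a ⇀ y)`. -/
def T1 (c : ι → ι → k) : Module.End k (ι → k) :=
  ∑ p, ∑ q, c p q • (H.mulXL (e p) * H.hitL (e q))

end FinHopfSC

/-!
`T₁` is multiplicative because `⇀` makes `A*` a left `A`-module algebra: in `End_k(A*)`,
`(a ⇀ ·) ∘ (x ·) = ∑ (a₁ ⇀ x) · (a₂ ⇀ ·)`, which is the commutation rule of the smash product.
For the inverse, the operators `x_t · (S⁻¹(a_t) ⇀ ·)` sum to the rank-one map `y ↦ ⟨y, 1⟩ ε`.
In coordinates this is `a₂ S⁻¹(a₁) = ε(a) 1`, which becomes an antipode axiom after applying `S`,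
because `S` is an anti-algebra map. That in turn is the usual convolution argument in
`Hom(A ⊗ A, A)`: `S ∘ m` and `m ∘ (S ⊗ S) ∘ flip` are a left and a right convolution inverse of
`m`. Hence `T₁(∑ φ(x_s) x_t # S⁻¹(a_t) a_s) = ∑_s φ(x_s) ⟨a_s ⇀ ·, 1⟩ = φ`, and `T₁`, being
surjective between spaces of the same dimension, is bijective.
-/

namespace FinHopfSC

theorem sum₂_comm {α β γ δ M : Type*} [Fintype α] [Fintype β] [Fintype γ] [Fintype δ]
    [AddCommMonoid M] (f : α → β → γ → δ → M) :
    ∑ a, ∑ b, ∑ c, ∑ d, f a b c d = ∑ c, ∑ d, ∑ a, ∑ b, f a b c d := by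
  calc _ = ∑ a, ∑ c, ∑ d, ∑ b, f a b c d :=
        Finset.sum_congr rfl fun _ _ => Finset.sum_comm_cycle.symm
    _ = _ := Finset.sum_comm_cycle.symm

section StructureConstants

variable {k : Type*} [CommSemiring k] {ι : Type*} [Fintype ι]

def scMul (m : ι → ι → ι → k) (a b : ι → k) : ι → k :=
  fun r => ∑ s, ∑ t, a s * b t * m s t r

variable (m : ι → ι → ι → k)

theorem scMul_assoc (hm : ∀ a b c r, ∑ s, m a b s * m s c r = ∑ s, m b c s * m a s r)
    (a b c : ι → k) : scMul m (scMul m a b) c = scMul m a (scMul m b c) := by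
  funext r
  calc scMul m (scMul m a b) c r
      = ∑ z, ∑ x, ∑ y, a x * b y * c z * ∑ s, m x y s * m s z r := by
        simp only [scMul, Finset.sum_mul, Finset.mul_sum]
        rw [Finset.sum_comm]
        refine Finset.sum_congr rfl fun z _ => ?_
        rw [Finset.sum_comm]
        refine Finset.sum_congr rfl fun x _ => ?_
        rw [Finset.sum_comm]
        exact Finset.sum_congr rfl fun y _ => Finset.sum_congr rfl fun s _ => by ring
    _ = ∑ z, ∑ x, ∑ y, a x * b y * c z * ∑ s, m y z s * m x s r := by simp only [hm]
    _ = scMul m a (scMul m b c) r := by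
        simp only [scMul, Finset.sum_mul, Finset.mul_sum]
        rw [Finset.sum_comm]
        refine Finset.sum_congr rfl fun x _ => ?_
        rw [Finset.sum_comm_cycle]
        refine Finset.sum_congr rfl fun z _ => ?_
        rw [Finset.sum_comm]
        exact Finset.sum_congr rfl fun y _ => Finset.sum_congr rfl fun s _ => by ring

theorem scMul_unit_left [DecidableEq ι] (u : ι → k)
    (hu : ∀ b r, ∑ s, u s * m s b r = if b = r then 1 else 0) (b : ι → k) : scMul m u b = b := by
  funext r
  calc scMul m u b r = ∑ t, (∑ s, u s * m s t r) * b t := by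
        simp only [scMul, Finset.sum_mul]
        rw [Finset.sum_comm]
        exact Finset.sum_congr rfl fun t _ => Finset.sum_congr rfl fun s _ => by ring
    _ = b r := by simp [hu]

theorem scMul_unit_right [DecidableEq ι] (u : ι → k)
    (hu : ∀ a r, ∑ s, u s * m a s r = if a = r then 1 else 0) (a : ι → k) : scMul m a u = a := by
  funext r
  calc scMul m a u r = ∑ s, (∑ t, u t * m s t r) * a s := by
        simp only [scMul, Finset.sum_mul]
        exact Finset.sum_congr rfl fun s _ => Finset.sum_congr rfl fun t _ => by ring
    _ = a r := by simp [hu]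

def scMulₗ : (ι → k) →ₗ[k] (ι → k) →ₗ[k] (ι → k) :=
  LinearMap.mk₂ k (scMul m)
    (fun a a' b => by funext r; simp [scMul, add_mul, Finset.sum_add_distrib])
    (fun c a b => by funext r; simp [scMul, Finset.mul_sum, mul_assoc])
    (fun a b b' => by funext r; simp [scMul, mul_add, add_mul, Finset.sum_add_distrib])
    (fun c a b => by funext r; simp [scMul, Finset.mul_sum, mul_assoc, mul_left_comm])

end StructureConstants

section Convolution

variable {k : Type*} [CommSemiring k] {ι : Type*} [Fintype ι] {κ : Type*} [Fintype κ]
variable (m : ι → ι → ι → k) (D : κ → κ → κ → k)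

/-- Convolution in `Hom(C, A)`, where `C` is the coalgebra with structure constants `D` and a map
`C → A` is recorded by its values on the basis of `C`. -/
def scConv (f g : κ → ι → k) : κ → ι → k :=
  fun c => ∑ c₁, ∑ c₂, D c c₁ c₂ • scMulₗ m (f c₁) (g c₂)

theorem scConv_assoc (hm : ∀ a b c r, ∑ s, m a b s * m s c r = ∑ s, m b c s * m a s r)
    (hD : ∀ c c₁ c₂ c₃, ∑ d, D c d c₃ * D d c₁ c₂ = ∑ d, D c c₁ d * D d c₂ c₃)
    (f g h : κ → ι → k) : scConv m D (scConv m D f g) h = scConv m D f (scConv m D g h) := by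
  funext c
  have hm' := scMul_assoc m hm
  calc scConv m D (scConv m D f g) h c
      = ∑ c₃, ∑ c₁, ∑ c₂, (∑ d, D c d c₃ * D d c₁ c₂) •
          scMulₗ m (scMulₗ m (f c₁) (g c₂)) (h c₃) := by
        simp only [scConv, map_sum, map_smul, LinearMap.sum_apply, LinearMap.smul_apply,
          smul_smul, Finset.smul_sum, Finset.sum_smul]
        rw [Finset.sum_comm]
        refine Finset.sum_congr rfl fun c₃ _ => ?_
        rw [Finset.sum_comm]
        refine Finset.sum_congr rfl fun c₁ _ => ?_
        rw [Finset.sum_comm]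
    _ = ∑ c₃, ∑ c₁, ∑ c₂, (∑ d, D c c₁ d * D d c₂ c₃) •
          scMulₗ m (f c₁) (scMulₗ m (g c₂) (h c₃)) := by
        simp only [hD]
        exact Finset.sum_congr rfl fun _ _ => Finset.sum_congr rfl fun _ _ =>
          Finset.sum_congr rfl fun _ _ => congrArg _ (hm' _ _ _)
    _ = scConv m D f (scConv m D g h) c := by
        simp only [scConv, map_sum, map_smul, smul_smul, Finset.smul_sum, Finset.sum_smul]
        rw [Finset.sum_comm]
        refine Finset.sum_congr rfl fun c₁ _ => ?_
        rw [Finset.sum_comm_cycle]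
        refine Finset.sum_congr rfl fun d _ => ?_
        rw [Finset.sum_comm]

variable [DecidableEq ι] [DecidableEq κ]

theorem scConv_unit_right (u : ι → k) (hu : ∀ a r, ∑ s, u s * m a s r = if a = r then 1 else 0)
    (ε : κ → k) (hε : ∀ c c₁, ∑ c₂, D c c₁ c₂ * ε c₂ = if c = c₁ then 1 else 0)
    (f : κ → ι → k) : scConv m D f (fun c => ε c • u) = f := by
  funext c
  calc scConv m D f (fun c => ε c • u) c = ∑ c₁, (∑ c₂, D c c₁ c₂ * ε c₂) • f c₁ := by
        simp only [scConv, map_smul, smul_smul, Finset.sum_smul]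
        exact Finset.sum_congr rfl fun c₁ _ => Finset.sum_congr rfl fun c₂ _ => by
          rw [show scMulₗ m (f c₁) u = f c₁ from scMul_unit_right m u hu (f c₁)]
    _ = f c := by simp [hε]

theorem scConv_unit_left (u : ι → k) (hu : ∀ b r, ∑ s, u s * m s b r = if b = r then 1 else 0)
    (ε : κ → k) (hε : ∀ c c₂, ∑ c₁, D c c₁ c₂ * ε c₁ = if c = c₂ then 1 else 0)
    (g : κ → ι → k) : scConv m D (fun c => ε c • u) g = g := by
  funext c
  calc scConv m D (fun c => ε c • u) g c = ∑ c₂, (∑ c₁, D c c₁ c₂ * ε c₁) • g c₂ := by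
        simp only [scConv, map_smul, LinearMap.smul_apply, smul_smul, Finset.sum_smul]
        rw [Finset.sum_comm]
        exact Finset.sum_congr rfl fun c₂ _ => Finset.sum_congr rfl fun c₁ _ => by
          rw [show scMulₗ m u (g c₂) = g c₂ from scMul_unit_left m u hu (g c₂)]
    _ = g c := by simp [hε]

end Convolution

variable {k : Type*} [Field k] {ι : Type*} [Fintype ι] [DecidableEq ι] (H : FinHopfSC k ι)

theorem sum_smul_e (x : ι → k) : ∑ i, x i • e i = x := (pi_eq_sum_univ x).symm

theorem e_dotProduct (i : ι) (x : ι → k) : e i ⬝ᵥ x = x i := by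
  simp [e, dotProduct]

section Algebras

abbrev mulAₗ : (ι → k) →ₗ[k] (ι → k) →ₗ[k] (ι → k) := scMulₗ H.mul

@[simp] theorem mulAₗ_apply (a b : ι → k) : H.mulAₗ a b = H.mulA a b := rfl

theorem mulA_sum_left {α : Type*} (s : Finset α) (f : α → ι → k) (b : ι → k) :
    H.mulA (∑ i ∈ s, f i) b = ∑ i ∈ s, H.mulA (f i) b :=
  map_sum (H.mulAₗ.flip b) f s

theorem mulA_sum_right {α : Type*} (s : Finset α) (a : ι → k) (f : α → ι → k) :
    H.mulA a (∑ i ∈ s, f i) = ∑ i ∈ s, H.mulA a (f i) :=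
  map_sum (H.mulAₗ a) f s

theorem mulA_smul_left (c : k) (a b : ι → k) : H.mulA (c • a) b = c • H.mulA a b :=
  LinearMap.map_smul₂ H.mulAₗ c a b

theorem mulA_smul_right (c : k) (a b : ι → k) : H.mulA a (c • b) = c • H.mulA a b :=
  map_smul (H.mulAₗ a) c b

theorem mulA_assoc (a b c : ι → k) : H.mulA (H.mulA a b) c = H.mulA a (H.mulA b c) :=
  scMul_assoc H.mul H.assoc a b c

theorem one_mulA (b : ι → k) : H.mulA H.one b = b := scMul_unit_left H.mul H.one H.one_mul b

theorem mulA_one (a : ι → k) : H.mulA a H.one = a := scMul_unit_right H.mul H.one H.mul_one a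

theorem mulA_e_e (a b : ι) : H.mulA (e a) (e b) = ∑ r, H.mul a b r • e r := by
  rw [sum_smul_e (H.mul a b)]
  funext r
  simp [mulA, e]

theorem mulX_eq_scMul : H.mulX = scMul (fun s t r => H.comul r s t) := by
  funext x y r
  exact Finset.sum_congr rfl fun s _ => Finset.sum_congr rfl fun t _ => by ring

theorem mulX_assoc (x y z : ι → k) : H.mulX (H.mulX x y) z = H.mulX x (H.mulX y z) := by
  rw [mulX_eq_scMul]
  refine scMul_assoc _ (fun a b c r => ?_) x y z
  simpa only [mul_comm] using H.coassoc r a b c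

theorem counit_mulX (y : ι → k) : H.mulX H.counit y = y := by
  rw [mulX_eq_scMul]
  refine scMul_unit_left _ H.counit (fun b r => ?_) y
  simpa only [mul_comm, eq_comm] using H.counit_comul r b

theorem mulX_counit (x : ι → k) : H.mulX x H.counit = x := by
  rw [mulX_eq_scMul]
  refine scMul_unit_right _ H.counit (fun a r => ?_) x
  simpa only [mul_comm, eq_comm] using H.comul_counit r a

end Algebras

section TensorSquare

/-- Structure constants of the coalgebra `A ⊗ A` in the basis `a_i ⊗ a_j`. -/
def comul₂ (c c₁ c₂ : ι × ι) : k := H.comul c.1 c₁.1 c₂.1 * H.comul c.2 c₁.2 c₂.2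

def counit₂ (c : ι × ι) : k := H.counit c.1 * H.counit c.2

theorem comul₂_coassoc (c c₁ c₂ c₃ : ι × ι) :
    ∑ d, H.comul₂ c d c₃ * H.comul₂ d c₁ c₂ = ∑ d, H.comul₂ c c₁ d * H.comul₂ d c₂ c₃ := by
  simp only [comul₂, Fintype.sum_prod_type, mul_mul_mul_comm _ (H.comul c.2 _ _),
    ← Finset.sum_mul_sum, H.coassoc]

theorem comul₂_counit (c c₁ : ι × ι) :
    ∑ c₂, H.comul₂ c c₁ c₂ * H.counit₂ c₂ = if c = c₁ then 1 else 0 := by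
  simp only [comul₂, counit₂, Fintype.sum_prod_type, mul_mul_mul_comm _ (H.comul c.2 _ _),
    ← Finset.sum_mul_sum, H.comul_counit, Prod.ext_iff, ite_zero_mul_ite_zero, _root_.mul_one]

theorem counit_comul₂ (c c₂ : ι × ι) :
    ∑ c₁, H.comul₂ c c₁ c₂ * H.counit₂ c₁ = if c = c₂ then 1 else 0 := by
  simp only [comul₂, counit₂, Fintype.sum_prod_type, mul_mul_mul_comm _ (H.comul c.2 _ _),
    ← Finset.sum_mul_sum, H.counit_comul, Prod.ext_iff, ite_zero_mul_ite_zero, _root_.mul_one]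

theorem comul₂_mul (c : ι × ι) (s t : ι) :
    ∑ c₁, ∑ c₂, H.comul₂ c c₁ c₂ * H.mul c₁.1 c₁.2 s * H.mul c₂.1 c₂.2 t =
      ∑ r, H.mul c.1 c.2 r * H.comul r s t := by
  rw [H.comul_mul]
  simp only [comul₂, Fintype.sum_prod_type]
  refine Finset.sum_congr rfl fun a₁ _ => ?_
  rw [Finset.sum_comm]

/-- `Δ` is multiplicative, tested against an arbitrary bilinear map. -/
theorem sum_comul₂_smul_mulA {M : Type*} [AddCommGroup M] [Module k M]
    (B : (ι → k) →ₗ[k] (ι → k) →ₗ[k] M) (c : ι × ι) :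
    ∑ c₁, ∑ c₂, H.comul₂ c c₁ c₂ • B (H.mulA (e c₁.1) (e c₁.2)) (H.mulA (e c₂.1) (e c₂.2)) =
      ∑ r, H.mul c.1 c.2 r • ∑ s, ∑ t, H.comul r s t • B (e s) (e t) := by
  calc _ = ∑ s, ∑ t, (∑ c₁, ∑ c₂, H.comul₂ c c₁ c₂ * H.mul c₁.1 c₁.2 s * H.mul c₂.1 c₂.2 t) •
          B (e s) (e t) := by
        simp only [mulA_e_e, map_sum, map_smul, LinearMap.sum_apply, LinearMap.smul_apply,
          Finset.smul_sum, smul_smul, Finset.sum_smul]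
        rw [sum₂_comm, Finset.sum_comm]
        exact Finset.sum_congr rfl fun _ _ => Finset.sum_congr rfl fun _ _ =>
          Finset.sum_congr rfl fun _ _ => Finset.sum_congr rfl fun _ _ => by ring_nf
    _ = _ := by
        simp only [comul₂_mul, Finset.sum_smul, Finset.smul_sum, smul_smul]
        rw [Finset.sum_comm_cycle]

end TensorSquare

section Antipode

def SAₗ : (ι → k) →ₗ[k] (ι → k) := Matrix.vecMulLinear (Matrix.of H.S)

theorem SA_sum {α : Type*} (s : Finset α) (f : α → ι → k) :
    H.SA (∑ i ∈ s, f i) = ∑ i ∈ s, H.SA (f i) :=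
  map_sum H.SAₗ f s

theorem SA_smul (c : k) (a : ι → k) : H.SA (c • a) = c • H.SA a := map_smul H.SAₗ c a

theorem SA_SAinv (a : ι → k) : H.SA (H.SAinv a) = a := by
  have : Matrix.of H.Sinv * Matrix.of H.S = 1 := by
    ext a r
    simp [Matrix.mul_apply, H.Sinv_S, Matrix.one_apply]
  show Matrix.vecMul (Matrix.vecMul a (Matrix.of H.Sinv)) (Matrix.of H.S) = a
  rw [Matrix.vecMul_vecMul, this, Matrix.vecMul_one]

theorem SAinv_SA (a : ι → k) : H.SAinv (H.SA a) = a := by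
  have : Matrix.of H.S * Matrix.of H.Sinv = 1 := by
    ext a r
    simp [Matrix.mul_apply, H.S_Sinv, Matrix.one_apply]
  show Matrix.vecMul (Matrix.vecMul a (Matrix.of H.S)) (Matrix.of H.Sinv) = a
  rw [Matrix.vecMul_vecMul, this, Matrix.vecMul_one]

theorem SA_injective : Function.Injective H.SA :=
  Function.LeftInverse.injective H.SAinv_SA

theorem sum_comul_smul_mulA_SA_e (r : ι) :
    ∑ a, ∑ b, H.comul r a b • H.mulA (H.SA (e a)) (e b) = H.counit r • H.one := by
  funext t
  simp [mulA, SA, e, Finset.mul_sum, ← H.antipode_left, mul_assoc]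

theorem sum_comul_smul_mulA_e_SA (r : ι) :
    ∑ a, ∑ b, H.comul r a b • H.mulA (e a) (H.SA (e b)) = H.counit r • H.one := by
  funext t
  simp [mulA, SA, e, Finset.mul_sum, ← H.antipode_right, mul_assoc]

theorem scConv_SA_mulA_mulA :
    scConv H.mul H.comul₂ (fun c => H.SA (H.mulA (e c.1) (e c.2)))
      (fun c => H.mulA (e c.1) (e c.2)) = fun c => H.counit₂ c • H.one := by
  funext c
  calc _ = ∑ r, H.mul c.1 c.2 r • ∑ s, ∑ t, H.comul r s t • H.mulA (H.SA (e s)) (e t) :=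
        H.sum_comul₂_smul_mulA (H.mulAₗ.compl₁₂ H.SAₗ LinearMap.id) c
    _ = H.counit₂ c • H.one := by
        simp only [sum_comul_smul_mulA_SA_e, smul_smul, ← Finset.sum_smul, H.counit_mul, counit₂]

theorem scConv_mulA_mulA_SA :
    scConv H.mul H.comul₂ (fun c => H.mulA (e c.1) (e c.2))
      (fun c => H.mulA (H.SA (e c.2)) (H.SA (e c.1))) = fun c => H.counit₂ c • H.one := by
  funext c
  calc _ = ∑ a₁, ∑ a₂, H.comul c.1 a₁ a₂ • H.mulA (e a₁)
          (H.mulA (∑ b₁, ∑ b₂, H.comul c.2 b₁ b₂ • H.mulA (e b₁) (H.SA (e b₂))) (H.SA (e a₂))) := by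
        simp only [scConv, mulAₗ_apply, comul₂, Fintype.sum_prod_type, mulA_sum_left,
          mulA_sum_right, mulA_smul_left, mulA_smul_right, Finset.smul_sum, smul_smul]
        refine Finset.sum_congr rfl fun a₁ _ => ?_
        rw [Finset.sum_comm]
        refine Finset.sum_congr rfl fun a₂ _ => Finset.sum_congr rfl fun b₁ _ =>
          Finset.sum_congr rfl fun b₂ _ => ?_
        rw [H.mulA_assoc, H.mulA_assoc (e b₁)]
    _ = H.counit₂ c • H.one := by
        rw [H.sum_comul_smul_mulA_e_SA c.2]
        simp only [mulA_smul_left, one_mulA, mulA_smul_right,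
          smul_comm (H.comul _ _ _) (H.counit c.2), ← Finset.smul_sum]
        rw [sum_comul_smul_mulA_e_SA, smul_smul, counit₂, mul_comm]

theorem SA_mulA_e_e (a b : ι) : H.SA (H.mulA (e a) (e b)) = H.mulA (H.SA (e b)) (H.SA (e a)) := by
  let M : ι × ι → ι → k := fun c => H.mulA (e c.1) (e c.2)
  let U : ι × ι → ι → k := fun c => H.counit₂ c • H.one
  have conv_assoc := scConv_assoc H.mul H.comul₂ H.assoc H.comul₂_coassoc
  have key : (fun c => H.SA (M c)) = fun c => H.mulA (H.SA (e c.2)) (H.SA (e c.1)) := calc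
    _ = scConv H.mul H.comul₂ (fun c => H.SA (M c)) U :=
        (scConv_unit_right _ _ H.one H.mul_one _ H.comul₂_counit _).symm
    _ = scConv H.mul H.comul₂ (fun c => H.SA (M c)) (scConv H.mul H.comul₂ M _) := by
        rw [H.scConv_mulA_mulA_SA]
    _ = scConv H.mul H.comul₂ U _ := by rw [← conv_assoc, H.scConv_SA_mulA_mulA]
    _ = _ := scConv_unit_left _ _ H.one H.one_mul _ H.counit_comul₂ _
  exact congrFun key (a, b)

theorem SA_mulA (a b : ι → k) : H.SA (H.mulA a b) = H.mulA (H.SA b) (H.SA a) := by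
  rw [← sum_smul_e a, ← sum_smul_e b]
  simp only [mulA_sum_left, mulA_sum_right, mulA_smul_left, mulA_smul_right, SA_sum, SA_smul,
    SA_mulA_e_e, Finset.smul_sum]
  rw [Finset.sum_comm]
  simp only [smul_comm (a _)]

theorem SA_one : H.SA H.one = H.one := calc
  H.SA H.one = H.mulA (H.SA H.one) H.one := (H.mulA_one _).symm
  _ = ∑ s, ∑ t, (∑ r, H.one r * H.comul r s t) • H.mulA (H.SA (e s)) (e t) := by
      conv_lhs => rw [← sum_smul_e H.one]
      simp only [H.comul_one, mulA_sum_left, mulA_sum_right, mulA_smul_left, mulA_smul_right,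
        SA_sum, SA_smul, Finset.smul_sum, smul_smul]
      rw [Finset.sum_comm]
      simp only [mul_comm]
  _ = ∑ r, H.one r • ∑ s, ∑ t, H.comul r s t • H.mulA (H.SA (e s)) (e t) := by
      simp only [Finset.sum_smul, Finset.smul_sum, smul_smul]
      rw [Finset.sum_comm_cycle]
  _ = H.one := by
      simp only [sum_comul_smul_mulA_SA_e, smul_smul, ← Finset.sum_smul, H.counit_one, one_smul]

theorem sum_comul_smul_mulA_e_SAinv (a : ι) :
    ∑ p, ∑ q, H.comul a p q • H.mulA (e q) (H.SAinv (e p)) = H.counit a • H.one := by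
  apply H.SA_injective
  simp only [SA_sum, SA_smul, SA_mulA, SA_SAinv, SA_one]
  exact H.sum_comul_smul_mulA_e_SA a

end Antipode

section Action

theorem mulA_apply_eq_sum (v b : ι → k) (t : ι) :
    H.mulA v b t = ∑ s, v s * H.mulA (e s) b t := by
  conv_lhs => rw [← sum_smul_e v]
  simp [mulA_sum_left, mulA_smul_left, Finset.sum_apply]

theorem hit_apply_eq_sum (a y : ι → k) (r : ι) :
    H.hit a y r = ∑ t, H.mulA (e r) a t * y t := by
  have h t : H.mulA (e r) a t = ∑ s, a s * H.mul r s t := by simp [mulA, e]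
  simp only [hit, h, Finset.sum_mul]
  exact Finset.sum_comm

theorem hit_e_apply (q : ι) (y : ι → k) (r : ι) : H.hit (e q) y r = ∑ t, H.mul r q t * y t := by
  simp [hit, e]

theorem hit_mulA (a b y : ι → k) : H.hit (H.mulA a b) y = H.hit a (H.hit b y) := by
  funext r
  simp only [hit_apply_eq_sum, ← mulA_assoc, H.mulA_apply_eq_sum (H.mulA (e r) a), Finset.mul_sum,
    Finset.sum_mul, mul_assoc]
  exact Finset.sum_comm

theorem hit_one (y : ι → k) : H.hit H.one y = y := by
  funext r
  simp [hit_apply_eq_sum, mulA_one, e]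

theorem sum_one_mul_hit_e (s : ι) (y : ι → k) : ∑ r, H.one r * H.hit (e s) y r = y s := by
  simp only [hit_apply_eq_sum, Finset.mul_sum, ← mul_assoc]
  rw [Finset.sum_comm]
  simp only [← Finset.sum_mul, ← H.mulA_apply_eq_sum, one_mulA, e]
  simp

theorem hit_mulX (q : ι) (x y : ι → k) (r : ι) :
    H.hit (e q) (H.mulX x y) r =
      ∑ a, ∑ b, H.comul q a b * H.mulX (H.hit (e a) x) (H.hit (e b) y) r := by
  let B : (ι → k) →ₗ[k] (ι → k) →ₗ[k] k :=
    (LinearMap.mul k k).compl₁₂ ((dotProductBilin k k).flip x) ((dotProductBilin k k).flip y)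
  have hB (a b : ι → k) : B a b = (a ⬝ᵥ x) * (b ⬝ᵥ y) := rfl
  calc H.hit (e q) (H.mulX x y) r
        = ∑ t, H.mul r q t • ∑ u, ∑ v, H.comul t u v • B (e u) (e v) := by
        rw [hit_e_apply]
        simp only [hB, mulX, e_dotProduct, smul_eq_mul, Finset.mul_sum, mul_assoc]
    _ = ∑ c₁, ∑ c₂, H.comul₂ (r, q) c₁ c₂ •
          B (H.mulA (e c₁.1) (e c₁.2)) (H.mulA (e c₂.1) (e c₂.2)) :=
        (H.sum_comul₂_smul_mulA B (r, q)).symm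
    _ = _ := by
        simp only [hB, comul₂, Fintype.sum_prod_type, mulX, hit_apply_eq_sum, dotProduct,
          smul_eq_mul]
        conv_lhs => enter [2, s]; rw [Finset.sum_comm]
        rw [sum₂_comm]
        refine Finset.sum_congr rfl fun a _ => Finset.sum_congr rfl fun b _ => ?_
        rw [Finset.mul_sum]
        refine Finset.sum_congr rfl fun s _ => ?_
        rw [Finset.mul_sum]
        exact Finset.sum_congr rfl fun t _ => by ring

end Action

section Operators

@[simp] theorem mulXL_apply (x y : ι → k) : H.mulXL x y = H.mulX x y := rfl

@[simp] theorem hitL_apply (a y : ι → k) : H.hitL a y = H.hit a y := rfl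

theorem mulXL_mulX (x y : ι → k) : H.mulXL (H.mulX x y) = H.mulXL x * H.mulXL y :=
  LinearMap.ext (H.mulX_assoc x y)

theorem hitL_mulA (a b : ι → k) : H.hitL (H.mulA a b) = H.hitL a * H.hitL b :=
  LinearMap.ext (H.hit_mulA a b)

theorem mulXL_counit : H.mulXL H.counit = 1 := LinearMap.ext H.counit_mulX

theorem hitL_one : H.hitL H.one = 1 := LinearMap.ext H.hit_one

def mulXLₗ : (ι → k) →ₗ[k] Module.End k (ι → k) where
  toFun := H.mulXL
  map_add' x x' := LinearMap.ext fun y => by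
    simp only [mulXL, LinearMap.coe_mk, AddHom.coe_mk, LinearMap.add_apply, mulX_eq_scMul]
    exact LinearMap.map_add₂ (scMulₗ _) x x' y
  map_smul' c x := LinearMap.ext fun y => by
    simp only [mulXL, LinearMap.coe_mk, AddHom.coe_mk, LinearMap.smul_apply, mulX_eq_scMul,
      RingHom.id_apply]
    exact LinearMap.map_smul₂ (scMulₗ _) c x y

def hitLₗ : (ι → k) →ₗ[k] Module.End k (ι → k) where
  toFun := H.hitL
  map_add' a a' := LinearMap.ext fun y => funext fun r => by
    simp [hitL, hit, add_mul, Finset.sum_add_distrib]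
  map_smul' c a := LinearMap.ext fun y => funext fun r => by
    simp [hitL, hit, Finset.mul_sum, mul_assoc]

theorem mulXL_eq_sum (x : ι → k) : H.mulXL x = ∑ p, x p • H.mulXL (e p) := by
  conv_lhs => rw [← sum_smul_e x]
  exact map_sum H.mulXLₗ _ _ |>.trans (Finset.sum_congr rfl fun p _ => map_smul H.mulXLₗ _ _)

theorem hitL_eq_sum (a : ι → k) : H.hitL a = ∑ q, a q • H.hitL (e q) := by
  conv_lhs => rw [← sum_smul_e a]
  exact map_sum H.hitLₗ _ _ |>.trans (Finset.sum_congr rfl fun p _ => map_smul H.hitLₗ _ _)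

theorem hitL_e_mul_mulXL (q : ι) (x : ι → k) : H.hitL (e q) * H.mulXL x =
    ∑ a, ∑ b, H.comul q a b • (H.mulXL (H.hit (e a) x) * H.hitL (e b)) := by
  refine LinearMap.ext fun y => funext fun r => ?_
  simpa [Finset.sum_apply] using H.hit_mulX q x y r

end Operators

section HeisenbergDouble

theorem T1_add (c d : ι → ι → k) : H.T1 (c + d) = H.T1 c + H.T1 d := by
  simp only [T1, Pi.add_apply, add_smul, Finset.sum_add_distrib]

theorem T1_smul (r : k) (c : ι → ι → k) : H.T1 (r • c) = r • H.T1 c := by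
  simp only [T1, Pi.smul_apply, smul_eq_mul, mul_smul, Finset.smul_sum]

def T1ₗ : (ι → ι → k) →ₗ[k] Module.End k (ι → k) where
  toFun := H.T1
  map_add' := H.T1_add
  map_smul' := H.T1_smul

theorem T1ₗ_apply (c : ι → ι → k) : H.T1ₗ c = H.T1 c := rfl

theorem T1_mul_apply_mul (f g : ι → k) :
    H.T1 (fun u v => f u * g v) = H.mulXL f * H.hitL g := by
  rw [H.mulXL_eq_sum f, H.hitL_eq_sum g, Finset.sum_mul_sum]
  simp only [T1, smul_mul_smul_comm]

theorem T1_smashOne : H.T1 H.smashOne = 1 := by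
  unfold smashOne
  rw [T1_mul_apply_mul, mulXL_counit, hitL_one, _root_.mul_one]

theorem smashMul_eq_sum (c d : ι → ι → k) :
    H.smashMul c d = ∑ p, ∑ q, ∑ r, ∑ s, ∑ a, ∑ b, (c p q * d r s * H.comul q a b) •
      fun u v => H.mulX (e p) (H.hit (e a) (e r)) u * H.mulA (e b) (e s) v := by
  funext u v
  simp only [smashMul, Finset.sum_apply, Pi.smul_apply, smul_eq_mul, mul_assoc]

theorem T1_smashMul (c d : ι → ι → k) : H.T1 (H.smashMul c d) = H.T1 c * H.T1 d := calc
  H.T1 (H.smashMul c d) = ∑ p, ∑ q, ∑ r, ∑ s, ∑ a, ∑ b, (c p q * d r s * H.comul q a b) •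
      (H.mulXL (e p) * H.mulXL (H.hit (e a) (e r)) * H.hitL (e b) * H.hitL (e s)) := by
    rw [smashMul_eq_sum, ← T1ₗ_apply]
    simp only [map_sum, map_smul, T1ₗ_apply, T1_mul_apply_mul, mulXL_mulX, hitL_mulA, mul_assoc]
  _ = ∑ p, ∑ q, ∑ r, ∑ s, (c p q * d r s) •
      (H.mulXL (e p) * (H.hitL (e q) * H.mulXL (e r)) * H.hitL (e s)) := by
    simp only [hitL_e_mul_mulXL, Finset.mul_sum, Finset.sum_mul, Finset.smul_sum, smul_mul_assoc,
      mul_smul_comm, smul_smul, mul_assoc]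
  _ = H.T1 c * H.T1 d := by
    simp only [T1, Finset.sum_mul, Finset.mul_sum, smul_mul_smul_comm, mul_assoc]
    exact sum₂_comm _

theorem mulX_e_apply (t : ι) (z : ι → k) (r : ι) : H.mulX (e t) z r = ∑ b, H.comul r t b * z b := by
  simp [mulX, e]

theorem sum_mulXL_e_mul_hitL_SAinv_e :
    ∑ t, H.mulXL (e t) * H.hitL (H.SAinv (e t)) =
      LinearMap.smulRight (dotProductBilin k k H.one) H.counit := by
  refine LinearMap.ext fun y => funext fun r => ?_
  have h t' := congrFun (H.sum_comul_smul_mulA_e_SAinv r) t'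
  simp only [Finset.sum_apply, Pi.smul_apply, smul_eq_mul] at h
  calc _ = ∑ t', (∑ t, ∑ b, H.comul r t b * H.mulA (e b) (H.SAinv (e t)) t') * y t' := by
        simp only [LinearMap.sum_apply, Module.End.mul_apply, mulXL_apply, hitL_apply,
          Finset.sum_apply, mulX_e_apply, hit_apply_eq_sum, Finset.mul_sum, Finset.sum_mul]
        rw [Finset.sum_comm_cycle]
        simp only [mul_assoc]
    _ = _ := by
        simp only [h, LinearMap.smulRight_apply, dotProductBilin_apply_apply, dotProduct,
          Pi.smul_apply, smul_eq_mul, Finset.sum_mul]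
        exact Finset.sum_congr rfl fun _ _ => by ring

theorem T1_inverse (φ : Module.End k (ι → k)) :
    H.T1 (fun u v => ∑ s, ∑ t,
      (H.mulX (φ (e s)) (e t)) u * (H.mulA (H.SAinv (e t)) (e s)) v) = φ := calc
  _ = ∑ s, H.mulXL (φ (e s)) * (∑ t, H.mulXL (e t) * H.hitL (H.SAinv (e t))) * H.hitL (e s) := by
    have : (fun u v => ∑ s, ∑ t, (H.mulX (φ (e s)) (e t)) u * (H.mulA (H.SAinv (e t)) (e s)) v) =
        ∑ s, ∑ t, fun u v => (H.mulX (φ (e s)) (e t)) u * (H.mulA (H.SAinv (e t)) (e s)) v := by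
      funext u v
      simp only [Finset.sum_apply]
    rw [this, ← T1ₗ_apply]
    simp only [map_sum, T1ₗ_apply, T1_mul_apply_mul, mulXL_mulX, hitL_mulA, Finset.mul_sum,
      Finset.sum_mul, mul_assoc]
  _ = φ := by
    refine LinearMap.ext fun y => ?_
    calc _ = ∑ s, y s • φ (e s) := by
          simp [sum_mulXL_e_mul_hitL_SAinv_e, sum_one_mul_hit_e, mulX_counit, dotProduct]
      _ = φ y := by simp only [← map_smul, ← map_sum, sum_smul_e]

theorem T1_bijective : Function.Bijective H.T1 := by
  have hsurj : Function.Surjective H.T1ₗ := fun φ => ⟨_, H.T1_inverse φ⟩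
  have hrank : Module.finrank k (ι → ι → k) = Module.finrank k (Module.End k (ι → k)) := by
    simp [Module.finrank_linearMap, Module.finrank_pi_fintype]
  exact ⟨(LinearMap.injective_iff_surjective_of_finrank_eq_finrank hrank).mpr hsurj, hsurj⟩

end HeisenbergDouble

end FinHopfSC

open FinHopfSC in
/-- the map `T₁ : A* # A → End_k(A*)`, `T₁(x # a)(y) = x (a ⇀ y)`,
is an algebra isomorphism from the Heisenberg double to `End_k(A*)`, whose
inverse sends `φ` to `∑ s t, φ(x_s) x_t # S⁻¹(a_t) a_s`. -/
theorem stmt10 (k : Type*) [Field k] (ι : Type*) [Fintype ι] [DecidableEq ι]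
    (H : FinHopfSC k ι) :
    (∀ c d : ι → ι → k, H.T1 (H.smashMul c d) = H.T1 c * H.T1 d) ∧
    H.T1 H.smashOne = 1 ∧
    (∀ c d : ι → ι → k, H.T1 (c + d) = H.T1 c + H.T1 d) ∧
    (∀ (r : k) (c : ι → ι → k), H.T1 (r • c) = r • H.T1 c) ∧
    Function.Bijective H.T1 ∧
    (∀ φ : Module.End k (ι → k),
      H.T1 (fun u v => ∑ s, ∑ t,
        (H.mulX (φ (e s)) (e t)) u * (H.mulA (H.SAinv (e t)) (e s)) v) = φ) :=
  ⟨H.T1_smashMul, H.T1_smashOne, H.T1_add, H.T1_smul, H.T1_bijective, H.T1_inverse⟩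
end

section
/- Let A be a finite-dimensional Hopf algebra with basis {a_t} and dual basis {x_t} of A*. Then in A* ⊗ A the identity Σ_{s,t} x_s S⁻²(x_t) ⊗ S(a_t)a_s = 1 ⊗ 1 holds, where S denotes the antipode (of A* and A respectively). -/
namespace FinHopfSC

variable {k : Type*} [Field k] {ι : Type*} [Fintype ι] [DecidableEq ι]
variable (H : FinHopfSC k ι)

set_option linter.unusedSectionVars false
lemma sw1 (f : ι → ι → k) :
    (∑ x1, ∑ x2, f x1 x2) = ∑ x2, ∑ x1, f x1 x2 :=
  Finset.sum_comm

lemma sw2 (f : ι → ι → ι → k) :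
    (∑ x1, ∑ x2, ∑ x3, f x1 x2 x3) = ∑ x1, ∑ x3, ∑ x2, f x1 x2 x3 :=
  Finset.sum_congr rfl fun _ _ => (Finset.sum_comm)

lemma sw3 (f : ι → ι → ι → ι → k) :
    (∑ x1, ∑ x2, ∑ x3, ∑ x4, f x1 x2 x3 x4) = ∑ x1, ∑ x2, ∑ x4, ∑ x3, f x1 x2 x3 x4 :=
  Finset.sum_congr rfl fun _ _ => (Finset.sum_congr rfl fun _ _ => (Finset.sum_comm))

lemma sw4 (f : ι → ι → ι → ι → ι → k) :
    (∑ x1, ∑ x2, ∑ x3, ∑ x4, ∑ x5, f x1 x2 x3 x4 x5) = ∑ x1, ∑ x2, ∑ x3, ∑ x5, ∑ x4, f x1 x2 x3 x4 x5 :=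
  Finset.sum_congr rfl fun _ _ => (Finset.sum_congr rfl fun _ _ => (Finset.sum_congr rfl fun _ _ => (Finset.sum_comm)))

lemma sw5 (f : ι → ι → ι → ι → ι → ι → k) :
    (∑ x1, ∑ x2, ∑ x3, ∑ x4, ∑ x5, ∑ x6, f x1 x2 x3 x4 x5 x6) = ∑ x1, ∑ x2, ∑ x3, ∑ x4, ∑ x6, ∑ x5, f x1 x2 x3 x4 x5 x6 :=
  Finset.sum_congr rfl fun _ _ => (Finset.sum_congr rfl fun _ _ => (Finset.sum_congr rfl fun _ _ => (Finset.sum_congr rfl fun _ _ => (Finset.sum_comm))))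

lemma sw6 (f : ι → ι → ι → ι → ι → ι → ι → k) :
    (∑ x1, ∑ x2, ∑ x3, ∑ x4, ∑ x5, ∑ x6, ∑ x7, f x1 x2 x3 x4 x5 x6 x7) = ∑ x1, ∑ x2, ∑ x3, ∑ x4, ∑ x5, ∑ x7, ∑ x6, f x1 x2 x3 x4 x5 x6 x7 :=
  Finset.sum_congr rfl fun _ _ => (Finset.sum_congr rfl fun _ _ => (Finset.sum_congr rfl fun _ _ => (Finset.sum_congr rfl fun _ _ => (Finset.sum_congr rfl fun _ _ => (Finset.sum_comm)))))

lemma sw7 (f : ι → ι → ι → ι → ι → ι → ι → ι → k) :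
    (∑ x1, ∑ x2, ∑ x3, ∑ x4, ∑ x5, ∑ x6, ∑ x7, ∑ x8, f x1 x2 x3 x4 x5 x6 x7 x8) = ∑ x1, ∑ x2, ∑ x3, ∑ x4, ∑ x5, ∑ x6, ∑ x8, ∑ x7, f x1 x2 x3 x4 x5 x6 x7 x8 :=
  Finset.sum_congr rfl fun _ _ => (Finset.sum_congr rfl fun _ _ => (Finset.sum_congr rfl fun _ _ => (Finset.sum_congr rfl fun _ _ => (Finset.sum_congr rfl fun _ _ => (Finset.sum_congr rfl fun _ _ => (Finset.sum_comm))))))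

lemma sw8 (f : ι → ι → ι → ι → ι → ι → ι → ι → ι → k) :
    (∑ x1, ∑ x2, ∑ x3, ∑ x4, ∑ x5, ∑ x6, ∑ x7, ∑ x8, ∑ x9, f x1 x2 x3 x4 x5 x6 x7 x8 x9) = ∑ x1, ∑ x2, ∑ x3, ∑ x4, ∑ x5, ∑ x6, ∑ x7, ∑ x9, ∑ x8, f x1 x2 x3 x4 x5 x6 x7 x8 x9 :=
  Finset.sum_congr rfl fun _ _ => (Finset.sum_congr rfl fun _ _ => (Finset.sum_congr rfl fun _ _ => (Finset.sum_congr rfl fun _ _ => (Finset.sum_congr rfl fun _ _ => (Finset.sum_congr rfl fun _ _ => (Finset.sum_congr rfl fun _ _ => (Finset.sum_comm)))))))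

lemma sw9 (f : ι → ι → ι → ι → ι → ι → ι → ι → ι → ι → k) :
    (∑ x1, ∑ x2, ∑ x3, ∑ x4, ∑ x5, ∑ x6, ∑ x7, ∑ x8, ∑ x9, ∑ x10, f x1 x2 x3 x4 x5 x6 x7 x8 x9 x10) = ∑ x1, ∑ x2, ∑ x3, ∑ x4, ∑ x5, ∑ x6, ∑ x7, ∑ x8, ∑ x10, ∑ x9, f x1 x2 x3 x4 x5 x6 x7 x8 x9 x10 :=
  Finset.sum_congr rfl fun _ _ => (Finset.sum_congr rfl fun _ _ => (Finset.sum_congr rfl fun _ _ => (Finset.sum_congr rfl fun _ _ => (Finset.sum_congr rfl fun _ _ => (Finset.sum_congr rfl fun _ _ => (Finset.sum_congr rfl fun _ _ => (Finset.sum_congr rfl fun _ _ => (Finset.sum_comm))))))))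

lemma sw10 (f : ι → ι → ι → ι → ι → ι → ι → ι → ι → ι → ι → k) :
    (∑ x1, ∑ x2, ∑ x3, ∑ x4, ∑ x5, ∑ x6, ∑ x7, ∑ x8, ∑ x9, ∑ x10, ∑ x11, f x1 x2 x3 x4 x5 x6 x7 x8 x9 x10 x11) = ∑ x1, ∑ x2, ∑ x3, ∑ x4, ∑ x5, ∑ x6, ∑ x7, ∑ x8, ∑ x9, ∑ x11, ∑ x10, f x1 x2 x3 x4 x5 x6 x7 x8 x9 x10 x11 :=
  Finset.sum_congr rfl fun _ _ => (Finset.sum_congr rfl fun _ _ => (Finset.sum_congr rfl fun _ _ => (Finset.sum_congr rfl fun _ _ => (Finset.sum_congr rfl fun _ _ => (Finset.sum_congr rfl fun _ _ => (Finset.sum_congr rfl fun _ _ => (Finset.sum_congr rfl fun _ _ => (Finset.sum_congr rfl fun _ _ => (Finset.sum_comm)))))))))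

lemma sw11 (f : ι → ι → ι → ι → ι → ι → ι → ι → ι → ι → ι → ι → k) :
    (∑ x1, ∑ x2, ∑ x3, ∑ x4, ∑ x5, ∑ x6, ∑ x7, ∑ x8, ∑ x9, ∑ x10, ∑ x11, ∑ x12, f x1 x2 x3 x4 x5 x6 x7 x8 x9 x10 x11 x12) = ∑ x1, ∑ x2, ∑ x3, ∑ x4, ∑ x5, ∑ x6, ∑ x7, ∑ x8, ∑ x9, ∑ x10, ∑ x12, ∑ x11, f x1 x2 x3 x4 x5 x6 x7 x8 x9 x10 x11 x12 :=
  Finset.sum_congr rfl fun _ _ => (Finset.sum_congr rfl fun _ _ => (Finset.sum_congr rfl fun _ _ => (Finset.sum_congr rfl fun _ _ => (Finset.sum_congr rfl fun _ _ => (Finset.sum_congr rfl fun _ _ => (Finset.sum_congr rfl fun _ _ => (Finset.sum_congr rfl fun _ _ => (Finset.sum_congr rfl fun _ _ => (Finset.sum_congr rfl fun _ _ => (Finset.sum_comm))))))))))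


lemma sum_delta (t : ι) (f : ι → k) : (∑ s, f s * (if s = t then (1:k) else 0)) = f t := by
  simp

lemma sum_delta' (t : ι) (f : ι → k) : (∑ s, f s * (if t = s then (1:k) else 0)) = f t := by
  simp

lemma S_one (t : ι) : (∑ a, H.one a * H.S a t) = H.one t := by
  have h1 : (∑ r, H.one r * (H.counit r * H.one t)) = H.one t := by
    simp only [← mul_assoc, ← Finset.sum_mul, H.counit_one, _root_.one_mul]
  rw [← h1]
  simp only [← H.antipode_left, Finset.mul_sum]
  rw [Finset.sum_comm]
  refine Finset.sum_congr rfl fun a _ => ?_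
  conv_rhs => rw [Finset.sum_comm, sw2]
  simp only [← mul_assoc, ← Finset.sum_mul, H.comul_one]
  have h2 : ∀ b s : ι, H.one a * H.one b * H.S a s * H.mul s b t
      = (H.one a * H.S a s) * (H.one b * H.mul s b t) := fun b s => by ring
  simp only [h2]
  rw [Finset.sum_comm]
  simp only [← Finset.mul_sum, H.mul_one]
  rw [sum_delta]

lemma Sinv_one (v : ι) : (∑ w, H.one w * H.Sinv w v) = H.one v := by
  have h0 : (∑ w, H.one w * H.Sinv w v) = ∑ w, (∑ a, H.one a * H.S a w) * H.Sinv w v :=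
    Finset.sum_congr rfl fun w _ => by rw [S_one]
  rw [h0]
  simp only [Finset.sum_mul]
  rw [Finset.sum_comm]
  have h2 : ∀ a w : ι, H.one a * H.S a w * H.Sinv w v = H.one a * (H.S a w * H.Sinv w v) :=
    fun a w => by ring
  simp only [h2, ← Finset.mul_sum, H.S_Sinv]
  rw [sum_delta]

/-- `ν(a⊗b) = S(b)S(a)` -/
def nu (a b t : ι) : k := ∑ p, ∑ q, H.S b p * H.S a q * H.mul p q t

/-- `ρ(a⊗b) = S(ab)` -/
def rho (a b t : ι) : k := ∑ r, H.mul a b r * H.S r t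

lemma assoc2 (p q a2 b2 t : ι) :
    (∑ s, ∑ s', H.mul p q s * (H.mul a2 b2 s' * H.mul s s' t))
      = ∑ w1, ∑ w2, H.mul q a2 w1 * (H.mul p w1 w2 * H.mul w2 b2 t) := by
  have e1 : ∀ s, (∑ s', H.mul a2 b2 s' * H.mul s s' t)
      = ∑ s', H.mul s a2 s' * H.mul s' b2 t := fun s => (H.assoc s a2 b2 t).symm
  have e2 : ∀ s' s, H.mul p q s * (H.mul s a2 s' * H.mul s' b2 t)
      = (H.mul p q s * H.mul s a2 s') * H.mul s' b2 t := fun _ _ => by ring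
  conv_lhs =>
    simp only [← Finset.mul_sum]
    simp only [e1]
    simp only [Finset.mul_sum]
    rw [sw1]
    simp only [e2, ← Finset.sum_mul, H.assoc]
    simp only [Finset.sum_mul]
    rw [sw1]
  refine Finset.sum_congr rfl fun s _ => Finset.sum_congr rfl fun s' _ => by ring

lemma mul_sum2 (c : k) (f : ι → ι → k) :
    (∑ s, ∑ s', c * f s s') = c * ∑ s, ∑ s', f s s' := by
  simp only [Finset.mul_sum]

lemma nu_conv_mul (a b t : ι) :
    (∑ a1, ∑ b1, ∑ a2, ∑ b2, ∑ s, ∑ s', H.comul a a1 a2 * H.comul b b1 b2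
        * H.nu a1 b1 s * H.mul a2 b2 s' * H.mul s s' t)
      = H.counit a * H.counit b * H.one t := by
  have hre1 : ∀ a1 b1 a2 b2 p q s s' : ι,
      H.comul a a1 a2 * H.comul b b1 b2 * (H.S b1 p * H.S a1 q * H.mul p q s)
          * H.mul a2 b2 s' * H.mul s s' t
        = (H.comul a a1 a2 * H.comul b b1 b2 * H.S b1 p * H.S a1 q)
            * (H.mul p q s * (H.mul a2 b2 s' * H.mul s s' t)) := by intros; ring
  have hre2 : ∀ b1 b2 p w1 w2 a1 a2 q : ι,
      H.comul a a1 a2 * H.comul b b1 b2 * H.S b1 p * H.S a1 q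
          * (H.mul q a2 w1 * (H.mul p w1 w2 * H.mul w2 b2 t))
        = (H.comul a a1 a2 * H.S a1 q * H.mul q a2 w1)
            * (H.comul b b1 b2 * H.S b1 p * (H.mul p w1 w2 * H.mul w2 b2 t)) := by
    intros; ring
  have hre3 : ∀ b1 b2 p w2 w1 : ι,
      H.counit a * H.one w1
          * (H.comul b b1 b2 * H.S b1 p * (H.mul p w1 w2 * H.mul w2 b2 t))
        = (H.counit a * (H.comul b b1 b2 * H.S b1 p * H.mul w2 b2 t))
            * (H.one w1 * H.mul p w1 w2) := by intros; ring
  have hre4 : ∀ b1 b2 p : ι,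
      H.counit a * (H.comul b b1 b2 * H.S b1 p * H.mul p b2 t)
        = (H.comul b b1 b2 * H.S b1 p * H.mul p b2 t) * H.counit a := by intros; ring
  conv_lhs =>
    simp only [nu, Finset.sum_mul, Finset.mul_sum]
    rw [sw6]; rw [sw5]; rw [sw7]; rw [sw6]
    simp only [hre1]
    simp only [mul_sum2]
    simp only [assoc2]
    simp only [Finset.mul_sum]
    rw [sw1]; rw [sw3]; rw [sw2]; rw [sw4]; rw [sw3]; rw [sw6]; rw [sw5]; rw [sw4]
    rw [sw7]; rw [sw6]; rw [sw5]
    simp only [hre2, ← Finset.sum_mul]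
    simp only [H.antipode_left]
    rw [sw4]
    simp only [hre3, ← Finset.mul_sum]
    simp only [H.mul_one]
    simp only [sum_delta']
    simp only [hre4, ← Finset.sum_mul]
    rw [H.antipode_left]
  ring

lemma mul_conv_rho (a b t : ι) :
    (∑ a1, ∑ b1, ∑ a2, ∑ b2, ∑ s, ∑ s', H.comul a a1 a2 * H.comul b b1 b2
        * H.mul a1 b1 s * H.rho a2 b2 s' * H.mul s s' t)
      = H.counit a * H.counit b * H.one t := by
  have hre1 : ∀ s s' r a1 a2 b1 b2 : ι,
      H.comul a a1 a2 * H.comul b b1 b2 * H.mul a1 b1 s * (H.mul a2 b2 r * H.S r s')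
          * H.mul s s' t
        = (H.comul a a1 a2 * H.comul b b1 b2 * H.mul a1 b1 s * H.mul a2 b2 r)
            * (H.S r s' * H.mul s s' t) := by intros; ring
  have hre2 : ∀ s s' r c : ι,
      H.mul a b c * H.comul c s r * (H.S r s' * H.mul s s' t)
        = (H.comul c s r * H.S r s' * H.mul s s' t) * H.mul a b c := by intros; ring
  have hre3 : ∀ c : ι,
      H.counit c * H.one t * H.mul a b c = (H.mul a b c * H.counit c) * H.one t := by
    intros; ring
  conv_lhs =>
    simp only [rho, Finset.sum_mul, Finset.mul_sum]
    rw [sw4]; rw [sw3]; rw [sw2]; rw [sw1]; rw [sw5]; rw [sw4]; rw [sw3]; rw [sw2]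
    rw [sw6]; rw [sw5]; rw [sw4]; rw [sw3]; rw [sw5]
    simp only [hre1, ← Finset.sum_mul]
    simp only [← H.comul_mul]
    simp only [Finset.sum_mul]
    rw [sw3]; rw [sw2]; rw [sw1]; rw [sw3]
    simp only [hre2, ← Finset.sum_mul]
    simp only [H.antipode_right]
    simp only [hre3, ← Finset.sum_mul]
    rw [H.counit_mul]

lemma mul_sum6 (c : k) (f : ι → ι → ι → ι → ι → ι → k) :
    (∑ x1, ∑ x2, ∑ x3, ∑ x4, ∑ x5, ∑ x6, c * f x1 x2 x3 x4 x5 x6)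
      = c * ∑ x1, ∑ x2, ∑ x3, ∑ x4, ∑ x5, ∑ x6, f x1 x2 x3 x4 x5 x6 := by
  simp only [Finset.mul_sum]

lemma big_eq_rho (a b t : ι) :
    (∑ am, ∑ bm, ∑ a3, ∑ b3, ∑ s3, ∑ w, ∑ a1, ∑ b1, ∑ a2, ∑ b2, ∑ s1, ∑ s2,
        (H.comul a am a3 * H.comul b bm b3 * H.rho a3 b3 s3 * H.mul w s3 t)
          * (H.comul am a1 a2 * H.comul bm b1 b2 * H.nu a1 b1 s1 * H.mul a2 b2 s2
              * H.mul s1 s2 w))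
      = H.rho a b t := by
  have hre1 : ∀ a3 b3 s3 am bm w : ι,
      (H.comul a am a3 * H.comul b bm b3 * H.rho a3 b3 s3 * H.mul w s3 t)
          * (H.counit am * H.counit bm * H.one w)
        = ((H.comul a am a3 * H.counit am) * ((H.comul b bm b3 * H.counit bm)
            * H.rho a3 b3 s3)) * (H.one w * H.mul w s3 t) := by intros; ring
  have hre2 : ∀ a3 b3 s3 am bm : ι,
      H.comul a am a3 * H.counit am * (H.comul b bm b3 * H.counit bm * H.rho a3 b3 s3)
          * (if s3 = t then (1:k) else 0)
        = ((H.comul a am a3 * H.counit am) * (H.rho a3 b3 s3 * if s3 = t then (1:k) else 0))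
            * (H.comul b bm b3 * H.counit bm) := by intros; ring
  have hre3 : ∀ a3 b3 s3 am : ι,
      ((H.comul a am a3 * H.counit am) * (H.rho a3 b3 s3 * if s3 = t then (1:k) else 0))
          * (if b = b3 then (1:k) else 0)
        = ((H.rho a3 b3 s3 * if s3 = t then (1:k) else 0) * if b = b3 then (1:k) else 0)
            * (H.comul a am a3 * H.counit am) := by intros; ring
  conv_lhs =>
    simp only [mul_sum6]
    simp only [nu_conv_mul]
    rw [sw2]; rw [sw1]; rw [sw3]; rw [sw2]; rw [sw4]; rw [sw3]
    simp only [hre1, ← Finset.mul_sum]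
    simp only [H.one_mul]
    simp only [hre2, ← Finset.mul_sum]
    simp only [H.counit_comul]
    simp only [hre3, ← Finset.mul_sum]
    simp only [H.counit_comul]
  simp

lemma hcoa (g : k) (r c x y : ι) :
    (∑ m, g * (H.comul r m c * H.comul m x y))
      = ∑ m, g * (H.comul r x m * H.comul m y c) := by
  rw [← Finset.mul_sum, ← Finset.mul_sum, H.coassoc]

lemma hassoc (g : k) (s1 s2 s3 t : ι) :
    (∑ w, g * (H.mul s1 s2 w * H.mul w s3 t))
      = ∑ w, g * (H.mul s2 s3 w * H.mul s1 w t) := by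
  rw [← Finset.mul_sum, ← Finset.mul_sum, H.assoc]

lemma hmul1 (g : k) (s1 t : ι) :
    (∑ w, g * (H.one w * H.mul s1 w t)) = g * (if s1 = t then 1 else 0) := by
  rw [← Finset.mul_sum, H.mul_one]

lemma hcc (g : k) (r x : ι) :
    (∑ m, g * (H.comul r x m * H.counit m)) = g * (if r = x then 1 else 0) := by
  rw [← Finset.mul_sum, H.comul_counit]

lemma hblock (g : k) (am bm w : ι) :
    (∑ a2, ∑ b2, ∑ a3, ∑ b3, ∑ s2, ∑ s3, g * (H.comul am a2 a3 * H.comul bm b2 b3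
        * H.mul a2 b2 s2 * H.rho a3 b3 s3 * H.mul s2 s3 w))
      = g * (H.counit am * H.counit bm * H.one w) := by
  rw [mul_sum6, mul_conv_rho]

set_option maxHeartbeats 1000000 in
lemma big_eq_nu (a b t : ι) :
    (∑ am, ∑ bm, ∑ a3, ∑ b3, ∑ s3, ∑ w, ∑ a1, ∑ b1, ∑ a2, ∑ b2, ∑ s1, ∑ s2,
        (H.comul a am a3 * H.comul b bm b3 * H.rho a3 b3 s3 * H.mul w s3 t)
          * (H.comul am a1 a2 * H.comul bm b1 b2 * H.nu a1 b1 s1 * H.mul a2 b2 s2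
              * H.mul s1 s2 w))
      = H.nu a b t := by
  rw [sw6]; rw [sw5]; rw [sw4]; rw [sw3]; rw [sw2]; rw [sw1]; rw [sw7]; rw [sw6]
  rw [sw5]; rw [sw4]; rw [sw3]; rw [sw2]; rw [sw8]; rw [sw7]; rw [sw6]; rw [sw5]
  rw [sw4]; rw [sw3]; rw [sw9]; rw [sw8]; rw [sw7]; rw [sw6]; rw [sw5]; rw [sw4]
  rw [sw6]; rw [sw5]; rw [sw7]; rw [sw6]; rw [sw10]; rw [sw9]; rw [sw8]; rw [sw7]
  rw [sw11]; rw [sw10]; rw [sw9]; rw [sw8]; rw [sw10]; rw [sw9]; rw [sw11]; rw [sw10]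
  trans (∑ a1, ∑ b1, ∑ a2, ∑ b2, ∑ a3, ∑ b3, ∑ s1, ∑ s2, ∑ s3, ∑ w, ∑ am, ∑ bm, (H.comul a am a3 * H.comul am a1 a2 * (H.rho a3 b3 s3 * H.mul w s3 t * (H.nu a1 b1 s1 * H.mul a2 b2 s2 * H.mul s1 s2 w))) * (H.comul b bm b3 * H.comul bm b1 b2))
  · refine Finset.sum_congr rfl fun _ _ => ?_
    refine Finset.sum_congr rfl fun _ _ => ?_
    refine Finset.sum_congr rfl fun _ _ => ?_
    refine Finset.sum_congr rfl fun _ _ => ?_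
    refine Finset.sum_congr rfl fun _ _ => ?_
    refine Finset.sum_congr rfl fun _ _ => ?_
    refine Finset.sum_congr rfl fun _ _ => ?_
    refine Finset.sum_congr rfl fun _ _ => ?_
    refine Finset.sum_congr rfl fun _ _ => ?_
    refine Finset.sum_congr rfl fun _ _ => ?_
    refine Finset.sum_congr rfl fun _ _ => ?_
    refine Finset.sum_congr rfl fun _ _ => ?_
    ring
  simp only [hcoa]
  rw [sw11]
  trans (∑ a1, ∑ b1, ∑ a2, ∑ b2, ∑ a3, ∑ b3, ∑ s1, ∑ s2, ∑ s3, ∑ w, ∑ bm, ∑ am, (H.comul b b1 bm * H.comul bm b2 b3 * (H.rho a3 b3 s3 * H.mul w s3 t * (H.nu a1 b1 s1 * H.mul a2 b2 s2 * H.mul s1 s2 w))) * (H.comul a am a3 * H.comul am a1 a2))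
  · refine Finset.sum_congr rfl fun _ _ => ?_
    refine Finset.sum_congr rfl fun _ _ => ?_
    refine Finset.sum_congr rfl fun _ _ => ?_
    refine Finset.sum_congr rfl fun _ _ => ?_
    refine Finset.sum_congr rfl fun _ _ => ?_
    refine Finset.sum_congr rfl fun _ _ => ?_
    refine Finset.sum_congr rfl fun _ _ => ?_
    refine Finset.sum_congr rfl fun _ _ => ?_
    refine Finset.sum_congr rfl fun _ _ => ?_
    refine Finset.sum_congr rfl fun _ _ => ?_
    refine Finset.sum_congr rfl fun _ _ => ?_
    refine Finset.sum_congr rfl fun _ _ => ?_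
    ring
  simp only [hcoa]
  rw [sw6]; rw [sw5]; rw [sw4]; rw [sw3]; rw [sw11]; rw [sw10]; rw [sw9]; rw [sw8]
  rw [sw7]; rw [sw6]; rw [sw5]; rw [sw4]; rw [sw11]; rw [sw10]; rw [sw9]; rw [sw8]
  rw [sw7]; rw [sw6]; rw [sw5]
  trans (∑ a1, ∑ b1, ∑ s1, ∑ am, ∑ bm, ∑ a2, ∑ b2, ∑ a3, ∑ b3, ∑ s2, ∑ s3, ∑ w, (H.comul a a1 am * H.comul b b1 bm * H.nu a1 b1 s1 * (H.comul am a2 a3 * H.comul bm b2 b3 * H.mul a2 b2 s2 * H.rho a3 b3 s3)) * (H.mul s1 s2 w * H.mul w s3 t))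
  · refine Finset.sum_congr rfl fun _ _ => ?_
    refine Finset.sum_congr rfl fun _ _ => ?_
    refine Finset.sum_congr rfl fun _ _ => ?_
    refine Finset.sum_congr rfl fun _ _ => ?_
    refine Finset.sum_congr rfl fun _ _ => ?_
    refine Finset.sum_congr rfl fun _ _ => ?_
    refine Finset.sum_congr rfl fun _ _ => ?_
    refine Finset.sum_congr rfl fun _ _ => ?_
    refine Finset.sum_congr rfl fun _ _ => ?_
    refine Finset.sum_congr rfl fun _ _ => ?_
    refine Finset.sum_congr rfl fun _ _ => ?_
    refine Finset.sum_congr rfl fun _ _ => ?_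
    ring
  simp only [hassoc]
  rw [sw11]; rw [sw10]; rw [sw9]; rw [sw8]; rw [sw7]; rw [sw6]
  trans (∑ a1, ∑ b1, ∑ s1, ∑ am, ∑ bm, ∑ w, ∑ a2, ∑ b2, ∑ a3, ∑ b3, ∑ s2, ∑ s3, (H.comul a a1 am * H.comul b b1 bm * H.nu a1 b1 s1 * H.mul s1 w t) * (H.comul am a2 a3 * H.comul bm b2 b3 * H.mul a2 b2 s2 * H.rho a3 b3 s3 * H.mul s2 s3 w))
  · refine Finset.sum_congr rfl fun _ _ => ?_
    refine Finset.sum_congr rfl fun _ _ => ?_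
    refine Finset.sum_congr rfl fun _ _ => ?_
    refine Finset.sum_congr rfl fun _ _ => ?_
    refine Finset.sum_congr rfl fun _ _ => ?_
    refine Finset.sum_congr rfl fun _ _ => ?_
    refine Finset.sum_congr rfl fun _ _ => ?_
    refine Finset.sum_congr rfl fun _ _ => ?_
    refine Finset.sum_congr rfl fun _ _ => ?_
    refine Finset.sum_congr rfl fun _ _ => ?_
    refine Finset.sum_congr rfl fun _ _ => ?_
    refine Finset.sum_congr rfl fun _ _ => ?_
    ring
  simp only [hblock]
  trans (∑ a1, ∑ b1, ∑ s1, ∑ am, ∑ bm, ∑ w, (H.nu a1 b1 s1 * ((H.comul a a1 am * H.counit am) * (H.comul b b1 bm * H.counit bm))) * (H.one w * H.mul s1 w t))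
  · refine Finset.sum_congr rfl fun _ _ => ?_
    refine Finset.sum_congr rfl fun _ _ => ?_
    refine Finset.sum_congr rfl fun _ _ => ?_
    refine Finset.sum_congr rfl fun _ _ => ?_
    refine Finset.sum_congr rfl fun _ _ => ?_
    refine Finset.sum_congr rfl fun _ _ => ?_
    ring
  simp only [hmul1]
  trans (∑ a1, ∑ b1, ∑ s1, ∑ am, ∑ bm, (H.nu a1 b1 s1 * (if s1 = t then (1:k) else 0) * (H.comul a a1 am * H.counit am)) * (H.comul b b1 bm * H.counit bm))
  · refine Finset.sum_congr rfl fun _ _ => ?_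
    refine Finset.sum_congr rfl fun _ _ => ?_
    refine Finset.sum_congr rfl fun _ _ => ?_
    refine Finset.sum_congr rfl fun _ _ => ?_
    refine Finset.sum_congr rfl fun _ _ => ?_
    ring
  simp only [hcc]
  trans (∑ a1, ∑ b1, ∑ s1, ∑ am, (H.nu a1 b1 s1 * (if s1 = t then (1:k) else 0) * (if b = b1 then (1:k) else 0)) * (H.comul a a1 am * H.counit am))
  · refine Finset.sum_congr rfl fun _ _ => ?_
    refine Finset.sum_congr rfl fun _ _ => ?_
    refine Finset.sum_congr rfl fun _ _ => ?_
    refine Finset.sum_congr rfl fun _ _ => ?_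
    ring
  simp only [hcc]
  simp [nu]


lemma S_antimul (a b t : ι) : H.rho a b t = H.nu a b t :=
  (H.big_eq_rho a b t).symm.trans (H.big_eq_nu a b t)

lemma hSinvS (g : k) (b q : ι) :
    (∑ r, g * (H.Sinv b r * H.S r q)) = g * (if b = q then 1 else 0) := by
  rw [← Finset.mul_sum, H.Sinv_S]

set_option maxHeartbeats 1000000 in
lemma sinv_cop (u v : ι) :
    (∑ s, ∑ b, ∑ r, H.comul u s b * H.Sinv b r * H.mul r s v)
      = H.counit u * H.one v := by
  have hrho : ∀ (g : k) (r s w : ι), (∑ v', g * (H.mul r s v' * H.S v' w)) = g * H.rho r s w := by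
    intros g r s w
    rw [← Finset.mul_sum]; rfl
  have step1 : ∀ w : ι, (∑ v', (∑ s, ∑ b, ∑ r, H.comul u s b * H.Sinv b r * H.mul r s v')
      * H.S v' w) = H.counit u * H.one w := by
    intro w
    conv_lhs => simp only [Finset.sum_mul]
    rw [sw1]; rw [sw2]; rw [sw3]
    trans (∑ s, ∑ b, ∑ r, ∑ v', (H.comul u s b * H.Sinv b r) * (H.mul r s v' * H.S v' w))
    · refine Finset.sum_congr rfl fun _ _ => ?_
      refine Finset.sum_congr rfl fun _ _ => ?_
      refine Finset.sum_congr rfl fun _ _ => ?_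
      refine Finset.sum_congr rfl fun _ _ => ?_
      ring
    simp only [hrho]
    simp only [S_antimul]
    simp only [nu]
    simp only [Finset.mul_sum]
    rw [sw3]; rw [sw4]
    trans (∑ s, ∑ b, ∑ p, ∑ q, ∑ r, (H.comul u s b * H.S s p * H.mul p q w)
        * (H.Sinv b r * H.S r q))
    · refine Finset.sum_congr rfl fun _ _ => ?_
      refine Finset.sum_congr rfl fun _ _ => ?_
      refine Finset.sum_congr rfl fun _ _ => ?_
      refine Finset.sum_congr rfl fun _ _ => ?_
      refine Finset.sum_congr rfl fun _ _ => ?_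
      ring
    simp only [hSinvS]
    trans (∑ s, ∑ b, ∑ p, ∑ q, (H.comul u s b * H.S s p * H.mul p q w)
        * (if b = q then (1:k) else 0))
    · rfl
    simp only [sum_delta']
    exact H.antipode_left u w
  calc (∑ s, ∑ b, ∑ r, H.comul u s b * H.Sinv b r * H.mul r s v)
      = ∑ v', (∑ s, ∑ b, ∑ r, H.comul u s b * H.Sinv b r * H.mul r s v')
          * (if v' = v then 1 else 0) :=
        (sum_delta v (fun v' => ∑ s, ∑ b, ∑ r,
          H.comul u s b * H.Sinv b r * H.mul r s v')).symm
    _ = ∑ v', (∑ s, ∑ b, ∑ r, H.comul u s b * H.Sinv b r * H.mul r s v')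
          * (∑ w, H.S v' w * H.Sinv w v) := by simp only [H.S_Sinv]
    _ = ∑ w, (∑ v', (∑ s, ∑ b, ∑ r, H.comul u s b * H.Sinv b r * H.mul r s v')
          * H.S v' w) * H.Sinv w v := by
        simp only [Finset.mul_sum]
        rw [sw1]
        refine Finset.sum_congr rfl fun _ _ => ?_
        rw [Finset.sum_mul]
        refine Finset.sum_congr rfl fun _ _ => ?_
        ring
    _ = ∑ w, (H.counit u * H.one w) * H.Sinv w v := by simp only [step1]
    _ = H.counit u * H.one v := by
        have hre : ∀ w : ι, (H.counit u * H.one w) * H.Sinv w v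
            = H.counit u * (H.one w * H.Sinv w v) := fun w => by ring
        simp only [hre, ← Finset.mul_sum, Sinv_one]

lemma delta_sum (t : ι) (f : ι → k) : (∑ s, (if t = s then (1:k) else 0) * f s) = f t := by
  simp

lemma SXinv_e (i p : ι) : H.SXinv (e i) p = H.Sinv p i := by
  simp only [SXinv, e]
  rw [sum_delta']

lemma SXinv2_e (t b : ι) :
    H.SXinv (H.SXinv (e t)) b = ∑ r, H.Sinv b r * H.Sinv r t := by
  simp only [SXinv]
  refine Finset.sum_congr rfl fun r _ => ?_
  congr 1
  simp only [e]
  rw [sum_delta']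

lemma mulX_e_eval (i : ι) (y : ι → k) (u : ι) :
    H.mulX (e i) y u = ∑ b, H.comul u i b * y b := by
  simp only [mulX, e]
  rw [Finset.sum_comm]
  refine Finset.sum_congr rfl fun b _ => ?_
  have : ∀ x2 : ι, H.comul u x2 b * (if i = x2 then (1:k) else 0) * y b
      = (H.comul u x2 b * y b) * (if i = x2 then (1:k) else 0) := fun _ => by ring
  simp only [this]
  rw [sum_delta']

lemma mulA_SA_e (i j v : ι) :
    H.mulA (H.SA (e i)) (e j) v = ∑ p, H.S i p * H.mul p j v := by
  simp only [mulA, SA, e]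
  refine Finset.sum_congr rfl fun p _ => ?_
  have h1 : (∑ t', (if i = t' then (1:k) else 0) * H.S t' p) = H.S i p := delta_sum i _
  have : ∀ q : ι, (∑ t', (if i = t' then (1:k) else 0) * H.S t' p)
        * (if j = q then (1:k) else 0) * H.mul p q v
      = (H.S i p * H.mul p q v) * (if j = q then (1:k) else 0) := by
    intro q; rw [h1]; ring
  simp only [this]
  rw [sum_delta']


end FinHopfSC

open FinHopfSC in
/-- for a finite-dimensional Hopf algebra `A` with basis `{a_t}`
and dual basis `{x_t}`, the identity `∑ s t, x_s S⁻²(x_t) ⊗ S(a_t) a_s = 1 ⊗ 1`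
holds in `A* ⊗ A` (an element of `A* ⊗ A` being recorded by its coefficient
matrix with respect to the basis `x_u ⊗ a_v`; the unit of `A*` is the counit
of `A`). -/
theorem stmt11 (k : Type*) [Field k] (ι : Type*) [Fintype ι] [DecidableEq ι]
    (H : FinHopfSC k ι) :
    (fun u v => ∑ s, ∑ t,
        (H.mulX (e s) (H.SXinv (H.SXinv (e t)))) u * (H.mulA (H.SA (e t)) (e s)) v)
      = fun u v => H.counit u * H.one v := by
  funext u v
  simp only [mulX_e_eval, SXinv2_e, mulA_SA_e]
  simp only [Finset.sum_mul, Finset.mul_sum]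
  rw [sw3]; rw [sw2]; rw [sw4]; rw [sw3]; rw [sw4]
  trans (∑ s, ∑ b, ∑ r, ∑ p, ∑ t, (H.comul u s b * H.Sinv b r * H.mul p s v)
      * (H.Sinv r t * H.S t p))
  · refine Finset.sum_congr rfl fun _ _ => ?_
    refine Finset.sum_congr rfl fun _ _ => ?_
    refine Finset.sum_congr rfl fun _ _ => ?_
    refine Finset.sum_congr rfl fun _ _ => ?_
    refine Finset.sum_congr rfl fun _ _ => ?_
    ring
  simp only [hSinvS]
  simp only [sum_delta']
  exact H.sinv_cop u v
end
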